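/- arXiv:1012.2076 — 8 statements merged into one kernel-verified Lean document; each statement's English description precedes it below -/
import Mathlib

section
/- The Stefan orbit α_{2n+1} is a cycle of full length: for every n ≥ 1, the permutation α_{2n+1} of {1,…,2n+1} is a cycle (Equiv.Perm.IsCycle) and its order equals 2n+1. -/
/-- The Stefan orbit `α_{2n+1}` is a cycle of full length.  Here `α` is the permutation of
`{1,…,2n+1}` (realized as `Fin (2*n+1)`, where `i : Fin (2*n+1)` represents the point
`(i : ℕ) + 1`) determined by: `α(i) = 2n+2−i` for `1 ≤ i ≤ n`, `α(i) = 2n+1−i` for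
`n+1 ≤ i ≤ 2n`, and `α(2n+1) = n+1`.  Then `α` is a cycle and its order is `2n+1`. -/
theorem stefan_alpha_isCycle_orderOf (n : ℕ) (hn : 1 ≤ n) (α : Equiv.Perm (Fin (2 * n + 1)))
    (h1 : ∀ i : Fin (2 * n + 1), 1 ≤ (i : ℕ) + 1 → (i : ℕ) + 1 ≤ n →
      (α i : ℕ) + 1 = 2 * n + 2 - ((i : ℕ) + 1))
    (h2 : ∀ i : Fin (2 * n + 1), n + 1 ≤ (i : ℕ) + 1 → (i : ℕ) + 1 ≤ 2 * n →
      (α i : ℕ) + 1 = 2 * n + 1 - ((i : ℕ) + 1))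
    (h3 : ∀ i : Fin (2 * n + 1), (i : ℕ) + 1 = 2 * n + 1 → (α i : ℕ) + 1 = n + 1) :
    α.IsCycle ∧ orderOf α = 2 * n + 1 := by
  set x₀ : Fin (2 * n + 1) := ⟨n, by omega⟩ with hx₀
  have hpow : ∀ j : ℕ, ∀ x : Fin (2 * n + 1), (α ^ (j + 1)) x = α ((α ^ j) x) := by
    intro j x
    rw [pow_succ']
    rfl
  -- orbit description
  have orbit : ∀ k : ℕ, k ≤ n →
      ((α ^ (2 * k)) x₀ : ℕ) = n + k ∧ (k < n → ((α ^ (2 * k + 1)) x₀ : ℕ) = n - 1 - k) := by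
    intro k
    induction k with
    | zero =>
      intro _
      constructor
      · simp [x₀]
      · intro hk
        have h0 : ((α ^ 0) x₀ : ℕ) = n := by simp [x₀]
        have := h2 ((α ^ 0) x₀) (by omega) (by omega)
        rw [hpow 0 x₀]
        omega
    | succ k ih =>
      intro hk1
      have ih' := ih (by omega)
      have hodd : ((α ^ (2 * k + 1)) x₀ : ℕ) = n - 1 - k := ih'.2 (by omega)
      have heven : ((α ^ (2 * (k + 1))) x₀ : ℕ) = n + (k + 1) := by
        have := h1 ((α ^ (2 * k + 1)) x₀) (by omega) (by omega)
        have hrw : (α ^ (2 * (k + 1))) x₀ = α ((α ^ (2 * k + 1)) x₀) := by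
          have : 2 * (k + 1) = (2 * k + 1) + 1 := by ring
          rw [this, hpow]
        rw [hrw]
        omega
      refine ⟨heven, ?_⟩
      intro hklt
      have := h2 ((α ^ (2 * (k + 1))) x₀) (by omega) (by omega)
      rw [hpow (2 * (k + 1)) x₀]
      omega
  -- every point is in the orbit of x₀
  have surj : ∀ y : Fin (2 * n + 1), ∃ j : ℕ, (α ^ j) x₀ = y := by
    intro y
    by_cases hy : n ≤ (y : ℕ)
    · refine ⟨2 * ((y : ℕ) - n), ?_⟩
      have := (orbit ((y : ℕ) - n) (by omega)).1
      have hlt := y.isLt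
      apply Fin.ext
      omega
    · refine ⟨2 * (n - 1 - (y : ℕ)) + 1, ?_⟩
      have := (orbit (n - 1 - (y : ℕ)) (by omega)).2 (by omega)
      apply Fin.ext
      omega
  -- no fixed points
  have nofix : ∀ i : Fin (2 * n + 1), α i ≠ i := by
    intro i hfix
    have hlt := i.isLt
    have hval : (α i : ℕ) = (i : ℕ) := by rw [hfix]
    by_cases hc1 : (i : ℕ) + 1 ≤ n
    · have := h1 i (by omega) hc1; omega
    · by_cases hc2 : (i : ℕ) + 1 ≤ 2 * n
      · have := h2 i (by omega) hc2; omega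
      · have := h3 i (by omega); omega
  have hcyc : α.IsCycle := by
    refine ⟨x₀, nofix x₀, ?_⟩
    intro y _
    obtain ⟨j, hj⟩ := surj y
    exact ⟨(j : ℤ), by rw [zpow_natCast]; exact hj⟩
  refine ⟨hcyc, ?_⟩
  rw [hcyc.orderOf]
  have hsupp : α.support = Finset.univ := by
    ext i
    simp [Equiv.Perm.mem_support, nofix i]
  rw [hsupp]
  simp
end

section
/- The Stefan orbit β_{2n+1} is a cycle of full length: for every n ≥ 1, the permutation β_{2n+1} of {1,…,2n+1} is a cycle (Equiv.Perm.IsCycle) and its order equals 2n+1. -/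
/-- The Stefan orbit `β_{2n+1}` is a cycle of full length.  Here `β` is the permutation of
`{1,…,2n+1}` (realized as `Fin (2*n+1)`, where `i : Fin (2*n+1)` represents the point
`(i : ℕ) + 1`) determined by: `β(1) = n+1`, `β(i) = 2n+3−i` for `2 ≤ i ≤ n+1`, and
`β(i) = 2n+2−i` for `n+2 ≤ i ≤ 2n+1`.  Then `β` is a cycle and its order is `2n+1`. -/
theorem stefan_beta_isCycle_orderOf (n : ℕ) (hn : 1 ≤ n) (β : Equiv.Perm (Fin (2 * n + 1)))
    (h1 : ∀ i : Fin (2 * n + 1), (i : ℕ) + 1 = 1 → (β i : ℕ) + 1 = n + 1)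
    (h2 : ∀ i : Fin (2 * n + 1), 2 ≤ (i : ℕ) + 1 → (i : ℕ) + 1 ≤ n + 1 →
      (β i : ℕ) + 1 = 2 * n + 3 - ((i : ℕ) + 1))
    (h3 : ∀ i : Fin (2 * n + 1), n + 2 ≤ (i : ℕ) + 1 → (i : ℕ) + 1 ≤ 2 * n + 1 →
      (β i : ℕ) + 1 = 2 * n + 2 - ((i : ℕ) + 1)) :
    β.IsCycle ∧ orderOf β = 2 * n + 1 := by
  have hz : (0 : ℕ) < 2 * n + 1 := by omega
  set z0 : Fin (2 * n + 1) := ⟨0, hz⟩ with hz0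
  -- trajectory computation
  have key : ∀ j, j ≤ n - 1 →
      (((β ^ (2 * j + 1)) z0 : Fin (2 * n + 1)) : ℕ) = n - j ∧
      (((β ^ (2 * j + 2)) z0 : Fin (2 * n + 1)) : ℕ) = n + 1 + j := by
    intro j
    induction j with
    | zero =>
      intro _
      have hb1 : (β z0 : ℕ) = n := by
        have := h1 z0 (by simp [hz0]); omega
      have e1 : (((β ^ (2 * 0 + 1)) z0 : Fin (2 * n + 1)) : ℕ) = n - 0 := by
        simpa using hb1
      refine ⟨e1, ?_⟩
      have step : ((β ^ (2 * 0 + 2)) z0 : ℕ) = (β ((β ^ (2 * 0 + 1)) z0) : ℕ) := by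
        rw [show 2 * 0 + 2 = (2 * 0 + 1) + 1 by rfl, pow_succ', Equiv.Perm.mul_apply]
      have hmid : ((β ^ (2 * 0 + 1)) z0 : ℕ) = n := by simpa using e1
      have := h2 ((β ^ (2 * 0 + 1)) z0) (by omega) (by omega)
      omega
    | succ j ih =>
      intro hj
      obtain ⟨ih1, ih2⟩ := ih (by omega)
      have hjn : j + 1 ≤ n - 1 := hj
      have step1 : ((β ^ (2 * (j + 1) + 1)) z0 : ℕ) = (β ((β ^ (2 * j + 2)) z0) : ℕ) := by
        rw [show 2 * (j + 1) + 1 = (2 * j + 2) + 1 by ring, pow_succ', Equiv.Perm.mul_apply]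
      have hv1 : (β ((β ^ (2 * j + 2)) z0) : ℕ) + 1 = 2 * n + 2 - (((β ^ (2 * j + 2)) z0 : ℕ) + 1) :=
        h3 _ (by omega) (by omega)
      have e1 : ((β ^ (2 * (j + 1) + 1)) z0 : ℕ) = n - (j + 1) := by omega
      refine ⟨e1, ?_⟩
      have step2 : ((β ^ (2 * (j + 1) + 2)) z0 : ℕ) = (β ((β ^ (2 * (j + 1) + 1)) z0) : ℕ) := by
        rw [show 2 * (j + 1) + 2 = (2 * (j + 1) + 1) + 1 by ring, pow_succ', Equiv.Perm.mul_apply]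
      have hv2 : (β ((β ^ (2 * (j + 1) + 1)) z0) : ℕ) + 1
          = 2 * n + 3 - (((β ^ (2 * (j + 1) + 1)) z0 : ℕ) + 1) :=
        h2 _ (by omega) (by omega)
      omega
  -- every point is in the cycle of z0
  have same : ∀ y : Fin (2 * n + 1), β.SameCycle z0 y := by
    intro y
    rcases Nat.eq_zero_or_pos (y : ℕ) with hy | hy
    · refine ⟨0, ?_⟩
      simp only [zpow_zero, Equiv.Perm.coe_one, id_eq]
      exact Fin.ext (by simp [hz0]; omega)
    · by_cases hle : (y : ℕ) ≤ n
      · set j := n - (y : ℕ) with hjdef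
        obtain ⟨e1, _⟩ := key j (by omega)
        refine ⟨(2 * j + 1 : ℕ), ?_⟩
        rw [zpow_natCast]
        exact Fin.ext (by omega)
      · have hyub : (y : ℕ) < 2 * n + 1 := y.isLt
        set j := (y : ℕ) - (n + 1) with hjdef
        obtain ⟨_, e2⟩ := key j (by omega)
        refine ⟨(2 * j + 2 : ℕ), ?_⟩
        rw [zpow_natCast]
        exact Fin.ext (by omega)
  have hcyc : β.IsCycle := by
    refine ⟨z0, ?_, fun y _ => same y⟩
    intro h
    have := h1 z0 (by simp [hz0])
    have : (β z0 : ℕ) = n := by omega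
    rw [h] at this
    simp [hz0] at this
    omega
  refine ⟨hcyc, ?_⟩
  have hnofix : ∀ y : Fin (2 * n + 1), β y ≠ y := by
    intro y h
    have hyub : (y : ℕ) < 2 * n + 1 := y.isLt
    have hby : (β y : ℕ) = (y : ℕ) := by rw [h]
    by_cases h0 : (y : ℕ) = 0
    · have := h1 y (by omega); omega
    · by_cases hle : (y : ℕ) + 1 ≤ n + 1
      · have := h2 y (by omega) hle; omega
      · have := h3 y (by omega) (by omega); omega
  have hsupp : β.support = Finset.univ := by
    ext y; simp [Equiv.Perm.mem_support, hnofix y]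
  rw [hcyc.orderOf, hsupp]
  simp
end

section
/- Square-root counting lemma: let n ≥ 1 and let σ₁ and σ₂ be any two cycles of length 2n+1 in the symmetric group on {1,…,2n+1}. Then the number of permutations θ of {1,…,4n+2} such that θ maps the set {1,…,2n+1} onto the set {2n+2,…,4n+2} and θ² = σ₁ ◇| σ₂ is exactly 2n+1. -/
/-- Right pasting `α ◇| β`: the permutation of `{1,…,m+n}` with
`(α ◇| β)(i) = α(i)` for `1 ≤ i ≤ m` and `(α ◇| β)(m+i) = β(i) + m` for `1 ≤ i ≤ n`. -/
def pasteRight {m n : ℕ} (α : Equiv.Perm (Fin m)) (β : Equiv.Perm (Fin n)) :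
    Equiv.Perm (Fin (m + n)) :=
  finSumFinEquiv.symm.trans ((Equiv.sumCongr α β).trans finSumFinEquiv)

/-- Transport a permutation of `Fin ((2n+1)+(2n+1))` to one of `Fin (4n+2)`. -/
def toPerm42 (n : ℕ) (σ : Equiv.Perm (Fin (2 * n + 1 + (2 * n + 1)))) :
    Equiv.Perm (Fin (4 * n + 2)) :=
  (finCongr (by omega : 2 * n + 1 + (2 * n + 1) = 4 * n + 2)).permCongr σ

/-!
A root `θ` exchanging the two halves is `a ↦ f a` on the first half and `b ↦ g b` on the second,
for permutations `f, g` of `{1,…,2n+1}`, and `θ² = σ₁ ◇| σ₂` says `g f = σ₁` and `f g = σ₂`.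
So `g = σ₁ f⁻¹` is determined by `f`, which ranges exactly over the conjugators
`f σ₁ f⁻¹ = σ₂`. These form a coset of the centralizer of `σ₁`, and the centralizer of a
cycle through all `2n+1` points is the cyclic group it generates, of order `2n+1`.
-/

open Equiv Subgroup

theorem ncard_setOf_conj_eq {G : Type*} [Group G] {a b : G} (h : IsConj a b) :
    Set.ncard {g : G | g * a * g⁻¹ = b} = Nat.card (centralizer {a}) := by
  obtain ⟨c, rfl⟩ := isConj_iff.mp h
  have hcoset : {g : G | g * a * g⁻¹ = c * a * c⁻¹} = (c * ·) '' (centralizer {a} : Set G) := by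
    ext g
    simp only [Set.mem_ofPred_eq, Set.mem_image, SetLike.mem_coe, mem_centralizer_singleton_iff]
    constructor
    · intro hg
      refine ⟨c⁻¹ * g, ?_, by group⟩
      calc c⁻¹ * g * a = c⁻¹ * (g * a * g⁻¹) * g := by group
        _ = a * (c⁻¹ * g) := by rw [hg]; group
    · rintro ⟨k, hk, rfl⟩
      calc c * k * a * (c * k)⁻¹ = c * (k * a) * k⁻¹ * c⁻¹ := by group
        _ = c * a * c⁻¹ := by rw [hk]; group
  rw [hcoset, Set.ncard_image_of_injective _ (mul_right_injective c), ← Nat.card_coe_set_eq]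
  rfl

theorem Equiv.Perm.IsCycle.nat_card_centralizer {α : Type*} [Fintype α] [DecidableEq α]
    {σ : Perm α} (hσ : σ.IsCycle) (hs : σ.support.card = Fintype.card α) :
    Nat.card (centralizer {σ}) = Fintype.card α := by
  simp [Equiv.Perm.nat_card_centralizer, hσ.cycleType, hs]

theorem Equiv.Perm.sumCongr_inj {α β : Type*} {f f' : Perm α} {g g' : Perm β} :
    Perm.sumCongr f g = Perm.sumCongr f' g' ↔ f = f' ∧ g = g' :=
  ⟨fun h ↦ Prod.ext_iff.mp (Perm.sumCongrHom_injective (a₁ := (f, g)) (a₂ := (f', g')) h),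
    fun ⟨hf, hg⟩ ↦ by rw [hf, hg]⟩

section HalfSwapping

variable {α : Type*}

theorem sumComm_mul_sumCongr_sq (f g : Perm α) :
    (sumComm α α * Perm.sumCongr f g) ^ 2 = Perm.sumCongr (g * f) (f * g) := by
  ext (a | a) <;> rfl

theorem image_range_inl_sumComm_mul_sumCongr (f g : Perm α) :
    ⇑(sumComm α α * Perm.sumCongr f g) '' Set.range Sum.inl = Set.range Sum.inr := by
  ext x
  constructor
  · rintro ⟨_, ⟨a, rfl⟩, rfl⟩
    exact ⟨f a, rfl⟩
  · rintro ⟨a, rfl⟩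
    exact ⟨Sum.inl (f⁻¹ a), ⟨_, rfl⟩, by simp⟩

theorem exists_eq_sumComm_mul_sumCongr [Finite α] {τ : Perm (α ⊕ α)}
    (hτ : ⇑τ '' Set.range Sum.inl = Set.range Sum.inr) :
    ∃ f g : Perm α, τ = sumComm α α * Perm.sumCongr f g := by
  have hmaps : Set.MapsTo ⇑(sumComm α α * τ) (Set.range Sum.inl) (Set.range Sum.inl) := by
    rintro _ ⟨a, rfl⟩
    obtain ⟨b, hb⟩ : τ (Sum.inl a) ∈ Set.range Sum.inr := hτ ▸ Set.mem_image_of_mem _ ⟨a, rfl⟩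
    exact ⟨b, by simp [← hb]⟩
  obtain ⟨⟨f, g⟩, hfg⟩ := Perm.mem_sumCongrHom_range_of_perm_mapsTo_inl hmaps
  refine ⟨f, g, ?_⟩
  rw [Perm.sumCongrHom_apply] at hfg
  rw [hfg, ← mul_assoc]
  ext x
  simp

theorem setOf_image_range_inl_and_sq_eq_sumCongr [Finite α] (σ₁ σ₂ : Perm α) :
    {τ : Perm (α ⊕ α) | ⇑τ '' Set.range Sum.inl = Set.range Sum.inr ∧
        τ ^ 2 = Perm.sumCongr σ₁ σ₂} =
      (fun f ↦ sumComm α α * Perm.sumCongr f (σ₁ * f⁻¹)) '' {f | f * σ₁ * f⁻¹ = σ₂} := by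
  ext τ
  constructor
  · rintro ⟨hτ, hsq⟩
    obtain ⟨f, g, rfl⟩ := exists_eq_sumComm_mul_sumCongr hτ
    rw [sumComm_mul_sumCongr_sq] at hsq
    obtain ⟨hgf, hfg⟩ := Perm.sumCongr_inj.mp hsq
    obtain rfl : g = σ₁ * f⁻¹ := eq_mul_inv_of_mul_eq hgf
    refine ⟨f, ?_, rfl⟩
    simpa [mul_assoc] using hfg
  · rintro ⟨f, hf, rfl⟩
    refine ⟨image_range_inl_sumComm_mul_sumCongr _ _, ?_⟩
    rw [sumComm_mul_sumCongr_sq, inv_mul_cancel_right, ← mul_assoc, hf]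

theorem sumComm_mul_sumCongr_injective (σ : Perm α) :
    Function.Injective fun f : Perm α ↦ sumComm α α * Perm.sumCongr f (σ * f⁻¹) :=
  fun _ _ h ↦ (Perm.sumCongr_inj.mp (mul_left_cancel h)).1

end HalfSwapping

theorem image_permCongr_setOf_image_and_sq_eq {X Y : Type*} (e : X ≃ Y) (A B : Set X)
    (σ : Perm X) :
    e.permCongr '' {τ : Perm X | ⇑τ '' A = B ∧ τ ^ 2 = σ} =
      {θ : Perm Y | ⇑θ '' (e '' A) = e '' B ∧ θ ^ 2 = e.permCongr σ} := by
  ext θ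
  obtain ⟨τ, rfl⟩ := e.permCongr.surjective θ
  have hsq : (e.permCongr τ) ^ 2 = e.permCongr (τ ^ 2) := by
    simp only [sq, permCongr_mul]
  have himage : ⇑(e.permCongr τ) '' (e '' A) = e '' (τ '' A) := by
    simp only [Set.image_image, permCongr_apply, symm_apply_apply]
  simp only [Set.mem_image_equiv, Set.mem_ofPred_eq, symm_apply_apply, himage, hsq,
    (Set.image_injective.mpr e.injective).eq_iff, e.permCongr.injective.eq_iff]

theorem image_finSumFinEquiv_range_inl {m n k : ℕ} (h : m + n = k) :
    ⇑(finSumFinEquiv.trans (finCongr h)) '' Set.range Sum.inl = {x : Fin k | (x : ℕ) < m} := by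
  ext x
  simp only [Set.mem_image, Set.mem_range, exists_exists_eq_and, trans_apply,
    finSumFinEquiv_apply_left, finCongr_apply, Set.mem_ofPred_eq]
  constructor
  · rintro ⟨a, rfl⟩
    exact a.isLt
  · intro hx
    exact ⟨⟨x, hx⟩, rfl⟩

theorem image_finSumFinEquiv_range_inr {m n k : ℕ} (h : m + n = k) :
    ⇑(finSumFinEquiv.trans (finCongr h)) '' Set.range Sum.inr = {x : Fin k | m ≤ (x : ℕ)} := by
  ext x
  simp only [Set.mem_image, Set.mem_range, exists_exists_eq_and, trans_apply,
    finSumFinEquiv_apply_right, finCongr_apply, Set.mem_ofPred_eq]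
  constructor
  · rintro ⟨a, rfl⟩
    simp
  · intro hx
    exact ⟨⟨x - m, by omega⟩, Fin.ext (by simp; omega)⟩

theorem count_square_roots_general (n : ℕ) (σ₁ σ₂ : Equiv.Perm (Fin (2 * n + 1)))
    (h₁ : σ₁.IsCycle ∧ σ₁.support.card = 2 * n + 1)
    (h₂ : σ₂.IsCycle ∧ σ₂.support.card = 2 * n + 1) :
    Set.ncard {θ : Equiv.Perm (Fin (4 * n + 2)) |
      ⇑θ '' {x : Fin (4 * n + 2) | (x : ℕ) < 2 * n + 1} =
        {x : Fin (4 * n + 2) | 2 * n + 1 ≤ (x : ℕ)} ∧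
      θ ^ 2 = toPerm42 n (pasteRight σ₁ σ₂)} = 2 * n + 1 := by
  have hsize : 2 * n + 1 + (2 * n + 1) = 4 * n + 2 := by omega
  set e := finSumFinEquiv.trans (finCongr hsize)
  have hpaste : toPerm42 n (pasteRight σ₁ σ₂) = e.permCongr (Perm.sumCongr σ₁ σ₂) := rfl
  have hconj : IsConj σ₁ σ₂ := h₁.1.isConj h₂.1 (h₁.2.trans h₂.2.symm)
  rw [← image_finSumFinEquiv_range_inl hsize, ← image_finSumFinEquiv_range_inr hsize, hpaste,
    ← image_permCongr_setOf_image_and_sq_eq, Set.ncard_image_of_injective _ e.permCongr.injective,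
    setOf_image_range_inl_and_sq_eq_sumCongr,
    Set.ncard_image_of_injective _ (sumComm_mul_sumCongr_injective σ₁), ncard_setOf_conj_eq hconj,
    h₁.1.nat_card_centralizer (by rw [h₁.2, Fintype.card_fin]), Fintype.card_fin]

/-- Square-root counting lemma: for any two `(2n+1)`-cycles `σ₁, σ₂` of `{1,…,2n+1}`,
there are exactly `2n+1` permutations `θ` of `{1,…,4n+2}` mapping `{1,…,2n+1}` onto
`{2n+2,…,4n+2}` with `θ² = σ₁ ◇| σ₂`.  (In `Fin (4*n+2)`, the point `i` is `(i : ℕ) + 1`,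
so `{1,…,2n+1}` is `{x | (x : ℕ) < 2n+1}` and `{2n+2,…,4n+2}` is `{x | 2n+1 ≤ (x : ℕ)}`.) -/
theorem count_square_roots (n : ℕ) (hn : 1 ≤ n) (σ₁ σ₂ : Equiv.Perm (Fin (2 * n + 1)))
    (h₁ : σ₁.IsCycle ∧ σ₁.support.card = 2 * n + 1)
    (h₂ : σ₂.IsCycle ∧ σ₂.support.card = 2 * n + 1) :
    Set.ncard {θ : Equiv.Perm (Fin (4 * n + 2)) |
      ⇑θ '' {x : Fin (4 * n + 2) | (x : ℕ) < 2 * n + 1} =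
        {x : Fin (4 * n + 2) | 2 * n + 1 ≤ (x : ℕ)} ∧
      θ ^ 2 = toPerm42 n (pasteRight σ₁ σ₂)} = 2 * n + 1 :=
  count_square_roots_general n σ₁ σ₂ h₁ h₂
end

section
/- Cardinality of simple permutations of mixed order 4n+2: let n ≥ 1 and let α = α_{2n+1}, β = β_{2n+1} be the two Stefan orbits of order 2n+1. Then the set of permutations θ of {1,…,4n+2} such that θ maps {1,…,2n+1} onto {2n+2,…,4n+2} and θ² is one of the four right pastings α ◇| α, α ◇| β, β ◇| α, β ◇| β has exactly 8n+4 elements. -/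
/-!
A permutation `θ` of `Fin (N + N)` mapping the lower half onto the upper one is
`swapPaste f g` for permutations `f, g` of `Fin N`, and its square is
`pasteRight (g * f) (f * g)`. Hence `θ ^ 2 = pasteRight γ δ` says exactly that `g = γ * f⁻¹`
and `f * γ * f⁻¹ = δ`: such `θ` correspond to the conjugators from `γ` to `δ`, a coset of the
centralizer of `γ`. The Stefan orbit `α` is a `(2n+1)`-cycle (`α ^ 2` acts as `i ↦ i + 1` on
`n + 1, …, 2n`), and `β` is its conjugate by the reversal `i ↦ 2n + 2 - i`. The centralizer of
a full cycle of length `2n + 1` has `2n + 1` elements, so each of the four pairs `(γ, δ)`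
contributes `2n + 1` permutations.
-/

open Equiv Finset Subgroup

section Pasting

variable {m n N : ℕ}

lemma pasteRight_apply_castAdd (α : Perm (Fin m)) (β : Perm (Fin n)) (x : Fin m) :
    pasteRight α β (Fin.castAdd n x) = Fin.castAdd n (α x) := by
  simp [pasteRight]

lemma pasteRight_apply_natAdd (α : Perm (Fin m)) (β : Perm (Fin n)) (x : Fin n) :
    pasteRight α β (Fin.natAdd m x) = Fin.natAdd m (β x) := by
  simp [pasteRight]

lemma pasteRight_inj {α α' : Perm (Fin m)} {β β' : Perm (Fin n)} :
    pasteRight α β = pasteRight α' β' ↔ α = α' ∧ β = β' := by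
  refine ⟨fun h => ⟨?_, ?_⟩, fun h => h.1 ▸ h.2 ▸ rfl⟩ <;> ext x : 1
  · simpa only [pasteRight_apply_castAdd, Fin.castAdd_inj] using congr($h (Fin.castAdd n x))
  · simpa only [pasteRight_apply_natAdd, Fin.natAdd_inj] using congr($h (Fin.natAdd m x))

def swapPaste (f g : Perm (Fin N)) : Perm (Fin (N + N)) :=
  finAddFlip.trans (pasteRight g f)

lemma swapPaste_apply_castAdd (f g : Perm (Fin N)) (x : Fin N) :
    swapPaste f g (Fin.castAdd N x) = Fin.natAdd N (f x) := by
  rw [swapPaste, trans_apply, finAddFlip_apply_castAdd, pasteRight_apply_natAdd]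

lemma swapPaste_apply_natAdd (f g : Perm (Fin N)) (x : Fin N) :
    swapPaste f g (Fin.natAdd N x) = Fin.castAdd N (g x) := by
  rw [swapPaste, trans_apply, finAddFlip_apply_natAdd, pasteRight_apply_castAdd]

lemma swapPaste_sq (f g : Perm (Fin N)) : swapPaste f g ^ 2 = pasteRight (g * f) (f * g) := by
  ext x : 1
  induction x using Fin.addCases <;>
    simp only [sq, Perm.mul_apply, swapPaste_apply_castAdd, swapPaste_apply_natAdd,
      pasteRight_apply_castAdd, pasteRight_apply_natAdd]

lemma swapPaste_injective : Function.Injective fun p : Perm (Fin N) × Perm (Fin N) =>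
    swapPaste p.1 p.2 := by
  rintro ⟨f, g⟩ ⟨f', g'⟩ h
  ext x : 2
  · simpa only [swapPaste_apply_castAdd, Fin.natAdd_inj] using congr($h (Fin.castAdd N x))
  · simpa only [swapPaste_apply_natAdd, Fin.castAdd_inj] using congr($h (Fin.natAdd N x))

lemma setOf_lt_eq_range_castAdd : {x : Fin (m + n) | (x : ℕ) < m} = Set.range (Fin.castAdd n) :=
  (Fin.range_castLE _).symm

lemma image_swapPaste (f g : Perm (Fin N)) :
    ⇑(swapPaste f g) '' {x | (x : ℕ) < N} = {x : Fin (N + N) | N ≤ (x : ℕ)} := by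
  rw [setOf_lt_eq_range_castAdd, ← Fin.range_natAdd, ← Set.range_comp]
  have hcomp : swapPaste f g ∘ Fin.castAdd N = Fin.natAdd N ∘ f :=
    funext (swapPaste_apply_castAdd f g)
  rw [hcomp, Set.range_comp, f.surjective.range_eq, Set.image_univ]

lemma exists_swapPaste_eq {σ : Perm (Fin (N + N))}
    (hσ : ⇑σ '' {x | (x : ℕ) < N} = {x : Fin (N + N) | N ≤ (x : ℕ)}) :
    ∃ f g, swapPaste f g = σ := by
  have hσ' : ⇑σ '' {x | N ≤ (x : ℕ)} = {x : Fin (N + N) | (x : ℕ) < N} := by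
    have hcompl (k : ℕ) :
        {x : Fin (N + N) | k ≤ (x : ℕ)} = {x : Fin (N + N) | (x : ℕ) < k}ᶜ := by
      ext; simp
    rw [hcompl, Set.image_compl_eq σ.bijective, hσ, hcompl, compl_compl]
  rw [setOf_lt_eq_range_castAdd, ← Fin.range_natAdd] at hσ hσ'
  have hlow (x : Fin N) : ∃ y, Fin.natAdd N y = σ (Fin.castAdd N x) :=
    hσ.subset (Set.mem_image_of_mem σ (Set.mem_range_self x))
  have hhigh (x : Fin N) : ∃ y, Fin.castAdd N y = σ (Fin.natAdd N x) :=
    hσ'.subset (Set.mem_image_of_mem σ (Set.mem_range_self x))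
  choose f hf using hlow
  choose g hg using hhigh
  have hf_inj : f.Injective := fun x y hxy =>
    Fin.castAdd_injective N N (σ.injective (by rw [← hf x, ← hf y, hxy]))
  have hg_inj : g.Injective := fun x y hxy =>
    Fin.natAdd_injective N N (σ.injective (by rw [← hg x, ← hg y, hxy]))
  refine ⟨.ofBijective f hf_inj.bijective_of_finite,
    .ofBijective g hg_inj.bijective_of_finite, ?_⟩
  ext x : 1
  induction x using Fin.addCases with
  | left x => rw [swapPaste_apply_castAdd, ofBijective_apply, hf]
  | right x => rw [swapPaste_apply_natAdd, ofBijective_apply, hg]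

end Pasting

section Conjugators

variable {G : Type*} [Group G] [Fintype G] [DecidableEq G]

lemma card_filter_conj_eq_nat_card_centralizer {a b : G} (h : IsConj a b) :
    #{f | f * a * f⁻¹ = b} = Nat.card (centralizer {a}) := by
  obtain ⟨c, rfl⟩ := isConj_iff.mp h
  have hcentralizer : Nat.card (centralizer {a}) = #{f | f * a = a * f} := by
    rw [← Nat.card_eq_finsetCard]
    simp [mem_centralizer_singleton_iff]
  rw [hcentralizer]
  refine card_nbij' (c⁻¹ * ·) (c * ·) ?_ ?_ ?_ ?_ <;> intro f <;>
    simp only [coe_filter, mem_univ, true_and, Set.mem_ofPred_eq, mul_inv_cancel_left,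
      inv_mul_cancel_left, implies_true]
  · intro hf
    rw [show c⁻¹ * f * a = c⁻¹ * (f * a * f⁻¹) * f by group, hf]
    group
  · intro hf
    rw [mul_assoc c f, hf]
    group

lemma card_filter_mul_mem_and_mul_mem (A : Finset G) (hA : ∀ a ∈ A, ∀ b ∈ A, IsConj a b)
    {k : ℕ} (hk : ∀ a ∈ A, Nat.card (centralizer {a}) = k) :
    #{p : G × G | p.2 * p.1 ∈ A ∧ p.1 * p.2 ∈ A} = #A ^ 2 * k := by
  -- `g` is recovered from `g * f` and `f`, and `f * g = f * (g * f) * f⁻¹`.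
  have hbij : #{p : G × G | p.2 * p.1 ∈ A ∧ p.1 * p.2 ∈ A} =
      #((A ×ˢ A).sigma fun ab => ({f | f * ab.1 * f⁻¹ = ab.2} : Finset G)) := by
    refine card_nbij' (fun p => ⟨(p.2 * p.1, p.1 * p.2), p.1⟩)
      (fun q => (q.2, q.1.1 * q.2⁻¹)) ?_ ?_ ?_ ?_
    · rintro ⟨f, g⟩ hfg
      simp only [mem_coe, mem_filter, mem_sigma, mem_product, mem_univ, true_and] at hfg ⊢
      exact ⟨hfg, by group⟩
    · rintro ⟨⟨a, b⟩, f⟩ h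
      simp only [mem_coe, mem_filter, mem_sigma, mem_product, mem_univ, true_and] at h ⊢
      obtain ⟨⟨ha, hb⟩, rfl⟩ := h
      rw [inv_mul_cancel_right, ← mul_assoc]
      exact ⟨ha, hb⟩
    · rintro ⟨f, g⟩ -
      simp
    · rintro ⟨⟨a, b⟩, f⟩ hf
      simp only [mem_coe, mem_filter, mem_sigma, mem_product, mem_univ, true_and] at hf
      obtain ⟨-, rfl⟩ := hf
      dsimp only
      rw [inv_mul_cancel_right, ← mul_assoc]
  rw [hbij, card_sigma, sum_const_nat fun ab hab => ?_, card_product, sq]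
  obtain ⟨ha, hb⟩ := mem_product.mp hab
  rw [card_filter_conj_eq_nat_card_centralizer (hA _ ha _ hb), hk _ ha]

end Conjugators

lemma Equiv.Perm.nat_card_centralizer_of_cycleType_eq {α : Type*} [Fintype α] [DecidableEq α]
    {σ : Perm α} (hσ : σ.cycleType = {Fintype.card α}) :
    Nat.card (centralizer {σ}) = Fintype.card α := by
  rw [nat_card_centralizer, hσ]
  simp

lemma ncard_swapsHalves_and_sq_eq_pasteRight {N : ℕ} (A : Finset (Perm (Fin N)))
    (hA : ∀ a ∈ A, a.cycleType = {N}) :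
    {σ : Perm (Fin (N + N)) |
      ⇑σ '' {x | (x : ℕ) < N} = {x : Fin (N + N) | N ≤ (x : ℕ)} ∧
        ∃ a ∈ A, ∃ b ∈ A, σ ^ 2 = pasteRight a b}.ncard = #A ^ 2 * N := by
  calc _ = ((fun p : Perm (Fin N) × Perm (Fin N) => swapPaste p.1 p.2) ''
        ↑({p : Perm (Fin N) × Perm (Fin N) | p.2 * p.1 ∈ A ∧ p.1 * p.2 ∈ A} :
          Finset _)).ncard := by
        congr 1
        ext σ
        constructor
        · rintro ⟨hσ, a, ha, b, hb, hsq⟩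
          obtain ⟨f, g, rfl⟩ := exists_swapPaste_eq hσ
          obtain ⟨rfl, rfl⟩ := pasteRight_inj.mp ((swapPaste_sq f g).symm.trans hsq)
          exact ⟨(f, g), by simpa using ⟨ha, hb⟩, rfl⟩
        · rintro ⟨⟨f, g⟩, hfg, rfl⟩
          simp only [coe_filter, mem_univ, true_and, Set.mem_ofPred_eq] at hfg
          exact ⟨image_swapPaste f g, _, hfg.1, _, hfg.2, swapPaste_sq f g⟩
    _ = #A ^ 2 * N := by
      rw [Set.ncard_image_of_injective _ swapPaste_injective, Set.ncard_coe_finset]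
      refine card_filter_mul_mem_and_mul_mem A (fun a ha b hb => ?_) (fun a ha => ?_)
      · rw [Perm.isConj_iff_cycleType_eq, hA a ha, hA b hb]
      · simpa using Perm.nat_card_centralizer_of_cycleType_eq (σ := a) (by simpa using hA a ha)

/-- The Stefan orbit `α_{2n+1}`, with `i : Fin (2n+1)` standing for the point `i + 1`. -/
def IsStefanAlpha (n : ℕ) (α : Perm (Fin (2 * n + 1))) : Prop :=
  (∀ i : Fin (2 * n + 1), (i : ℕ) < n → (α i : ℕ) = 2 * n - i) ∧
  (∀ i : Fin (2 * n + 1), n ≤ (i : ℕ) → (i : ℕ) < 2 * n →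
    (α i : ℕ) = 2 * n - 1 - i) ∧
  ∀ i : Fin (2 * n + 1), (i : ℕ) = 2 * n → (α i : ℕ) = n

/-- The Stefan orbit `β_{2n+1}`, with `i : Fin (2n+1)` standing for the point `i + 1`. -/
def IsStefanBeta (n : ℕ) (β : Perm (Fin (2 * n + 1))) : Prop :=
  (∀ i : Fin (2 * n + 1), (i : ℕ) = 0 → (β i : ℕ) = n) ∧
  (∀ i : Fin (2 * n + 1), 1 ≤ (i : ℕ) → (i : ℕ) ≤ n →
    (β i : ℕ) = 2 * n + 1 - i) ∧
  ∀ i : Fin (2 * n + 1), n + 1 ≤ (i : ℕ) → (β i : ℕ) = 2 * n - i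

namespace IsStefanAlpha

variable {n : ℕ} {α : Perm (Fin (2 * n + 1))}

lemma sq_apply (hα : IsStefanAlpha n α) (i : Fin (2 * n + 1)) (h₁ : n ≤ (i : ℕ))
    (h₂ : (i : ℕ) < 2 * n) : ((α ^ 2) i : ℕ) = i + 1 := by
  obtain ⟨hlow, hmid, -⟩ := hα
  have := hmid i h₁ h₂
  rw [sq, Perm.mul_apply, hlow _ (by omega)]
  omega

lemma pow_two_mul_apply_center (hα : IsStefanAlpha n α) {k : ℕ} (hk : k ≤ n) :
    ((α ^ (2 * k)) ⟨n, by omega⟩ : ℕ) = n + k := by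
  induction k with
  | zero => rfl
  | succ k ih =>
    have ih := ih (by omega)
    rw [show 2 * (k + 1) = 2 + 2 * k by ring, pow_add, Perm.mul_apply,
      hα.sq_apply _ (by omega) (by omega), ih]
    omega

lemma sameCycle_center (hα : IsStefanAlpha n α) (x : Fin (2 * n + 1)) :
    α.SameCycle ⟨n, by omega⟩ x := by
  rcases le_or_gt n (x : ℕ) with h | h
  · refine ⟨(2 * ((x : ℕ) - n) : ℕ), Fin.ext ?_⟩
    rw [zpow_natCast, hα.pow_two_mul_apply_center (by omega)]
    omega
  · refine ⟨(2 * (n - 1 - x) + 1 : ℕ), Fin.ext ?_⟩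
    have hy := hα.pow_two_mul_apply_center (k := n - 1 - x) (by omega)
    rw [zpow_natCast, pow_succ', Perm.mul_apply, hα.2.1 _ (by omega) (by omega)]
    omega

lemma apply_ne (hn : 0 < n) (hα : IsStefanAlpha n α) (x : Fin (2 * n + 1)) : α x ≠ x := by
  obtain ⟨hlow, hmid, htop⟩ := hα
  intro hx
  have hx' := congrArg Fin.val hx
  have := x.isLt
  rcases lt_or_ge (x : ℕ) n with h | h
  · have := hlow x h; omega
  rcases lt_or_ge (x : ℕ) (2 * n) with h' | h'
  · have := hmid x h h'; omega
  · have := htop x (by omega); omega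

lemma cycleType (hn : 0 < n) (hα : IsStefanAlpha n α) : α.cycleType = {2 * n + 1} := by
  have hcycle : α.IsCycle := ⟨_, hα.apply_ne hn _, fun y _ => hα.sameCycle_center y⟩
  have hsupport : α.support = univ :=
    eq_univ_of_forall fun x => Perm.mem_support.mpr (hα.apply_ne hn x)
  rw [hcycle.cycleType, hsupport, card_univ, Fintype.card_fin]

end IsStefanAlpha

lemma IsStefanBeta.isConj {n : ℕ} {α β : Perm (Fin (2 * n + 1))} (hα : IsStefanAlpha n α)
    (hβ : IsStefanBeta n β) : IsConj α β := by
  refine isConj_iff.mpr ⟨Fin.revPerm, ?_⟩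
  ext i : 1
  obtain ⟨hαlow, hαmid, hαtop⟩ := hα
  obtain ⟨hβlow, hβmid, hβtop⟩ := hβ
  have hrev (j : Fin (2 * n + 1)) : (j.rev : ℕ) = 2 * n - j := by rw [Fin.val_rev]; omega
  rw [Perm.mul_apply, Perm.mul_apply, Perm.inv_def, Fin.revPerm_symm, Fin.revPerm_apply,
    Fin.revPerm_apply, Fin.ext_iff, hrev]
  have := i.isLt
  have := hrev i
  rcases Nat.eq_zero_or_pos (i : ℕ) with h | h
  · have := hαtop i.rev (by omega)
    have := hβlow i h
    omega
  rcases le_or_gt (i : ℕ) n with h' | h'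
  · have := hαmid i.rev (by omega) (by omega)
    have := hβmid i h h'
    omega
  · have := hαlow i.rev (by omega)
    have := hβtop i h'
    omega

/-- Cardinality of simple permutations of mixed order `4n+2`: with `α = α_{2n+1}` and
`β = β_{2n+1}` the two Stefan orbits (characterized 1-indexed by the hypotheses, where
`i : Fin (2*n+1)` represents the point `(i : ℕ) + 1`), the set of permutations `θ` of
`{1,…,4n+2}` mapping `{1,…,2n+1}` onto `{2n+2,…,4n+2}` whose square is one of the four
right pastings `α ◇| α`, `α ◇| β`, `β ◇| α`, `β ◇| β` has exactly `8n+4` elements. -/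
theorem card_simple_mixed_order (n : ℕ) (hn : 1 ≤ n)
    (α β : Equiv.Perm (Fin (2 * n + 1)))
    (hα1 : ∀ i : Fin (2 * n + 1), 1 ≤ (i : ℕ) + 1 → (i : ℕ) + 1 ≤ n →
      (α i : ℕ) + 1 = 2 * n + 2 - ((i : ℕ) + 1))
    (hα2 : ∀ i : Fin (2 * n + 1), n + 1 ≤ (i : ℕ) + 1 → (i : ℕ) + 1 ≤ 2 * n →
      (α i : ℕ) + 1 = 2 * n + 1 - ((i : ℕ) + 1))
    (hα3 : ∀ i : Fin (2 * n + 1), (i : ℕ) + 1 = 2 * n + 1 → (α i : ℕ) + 1 = n + 1)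
    (hβ1 : ∀ i : Fin (2 * n + 1), (i : ℕ) + 1 = 1 → (β i : ℕ) + 1 = n + 1)
    (hβ2 : ∀ i : Fin (2 * n + 1), 2 ≤ (i : ℕ) + 1 → (i : ℕ) + 1 ≤ n + 1 →
      (β i : ℕ) + 1 = 2 * n + 3 - ((i : ℕ) + 1))
    (hβ3 : ∀ i : Fin (2 * n + 1), n + 2 ≤ (i : ℕ) + 1 → (i : ℕ) + 1 ≤ 2 * n + 1 →
      (β i : ℕ) + 1 = 2 * n + 2 - ((i : ℕ) + 1)) :
    Set.ncard {θ : Equiv.Perm (Fin (4 * n + 2)) |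
      ⇑θ '' {x : Fin (4 * n + 2) | (x : ℕ) < 2 * n + 1} =
        {x : Fin (4 * n + 2) | 2 * n + 1 ≤ (x : ℕ)} ∧
      (θ ^ 2 = toPerm42 n (pasteRight α α) ∨ θ ^ 2 = toPerm42 n (pasteRight α β) ∨
        θ ^ 2 = toPerm42 n (pasteRight β α) ∨ θ ^ 2 = toPerm42 n (pasteRight β β))} =
      8 * n + 4 := by
  have hα : IsStefanAlpha n α :=
    ⟨fun i h => by have := hα1 i (by omega) (by omega); omega,
      fun i h₁ h₂ => by have := hα2 i (by omega) (by omega); omega,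
      fun i h => by have := hα3 i (by omega); omega⟩
  have hβ : IsStefanBeta n β :=
    ⟨fun i h => by have := hβ1 i (by omega); omega,
      fun i h₁ h₂ => by have := hβ2 i (by omega) (by omega); omega,
      fun i h => by have := hβ3 i (by omega) (by omega); omega⟩
  have hαβ : α ≠ β := fun h => by
    have hαtop := hα.2.2 ⟨2 * n, by omega⟩ rfl
    have hβtop := hβ.2.2 ⟨2 * n, by omega⟩ (show n + 1 ≤ 2 * n by omega)
    rw [h] at hαtop
    simp only at hβtop
    omega
  have hcycleType : ∀ γ ∈ ({α, β} : Finset _), γ.cycleType = {2 * n + 1} := by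
    simp only [mem_insert, mem_singleton, forall_eq_or_imp, forall_eq]
    exact ⟨hα.cycleType hn,
      Perm.isConj_iff_cycleType_eq.mp (hβ.isConj hα) ▸ hα.cycleType hn⟩
  suffices ∀ M (hM : 2 * n + 1 + (2 * n + 1) = M), Set.ncard {θ : Perm (Fin M) |
      ⇑θ '' {x | (x : ℕ) < 2 * n + 1} = {x : Fin M | 2 * n + 1 ≤ (x : ℕ)} ∧
      ∃ a ∈ ({α, β} : Finset _), ∃ b ∈ ({α, β} : Finset _),
        θ ^ 2 = (finCongr hM).permCongr (pasteRight a b)} = 8 * n + 4 by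
    simpa [toPerm42, or_assoc] using this (4 * n + 2) (by omega)
  rintro _ rfl
  refine (ncard_swapsHalves_and_sq_eq_pasteRight {α, β} hcycleType).trans ?_
  rw [card_pair hαβ]
  ring
end

section
/- Let n ≥ 1 and let θ = α_{2n+1} |◇ Id_{2n+1} be the left pasting of the Stefan orbit α_{2n+1} with the identity permutation of {1,…,2n+1}. Then θ is a simple permutation of mixed order 4n+2; concretely: (i) θ maps the set {1,…,2n+1} onto the set {2n+2,…,4n+2} and maps {2n+2,…,4n+2} onto {1,…,2n+1}; (ii) θ² = α_{2n+1} ◇| α_{2n+1}; (iii) the order of θ is 4n+2. -/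
/-!
`θ` sends the lower half `x < 2n+1` to the upper half by `x ↦ 2n+1 + α x` and the upper half back
by `x ↦ x - (2n+1)`, so it exchanges the halves and `θ² = α ◇| α`. Since only even powers of a
half-exchanging permutation can be trivial, `orderOf θ = 2 · orderOf (θ²) = 2 · orderOf α`.
Finally `α_{2n+1}` is a single `(2n+1)`-cycle: it runs through `n, n-1, n+1, n-2, …, 0, 2n`
(0-indexed), i.e. it is conjugate to `finRotate (2n+1)`.
-/

/-- Left pasting `α |◇ β`: the permutation of `{1,…,m+n}` with
`(α |◇ β)(i) = α(i) + n` for `1 ≤ i ≤ m` and `(α |◇ β)(m+i) = β(i)` for `1 ≤ i ≤ n`. -/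
def pasteLeft {m n : ℕ} (α : Equiv.Perm (Fin m)) (β : Equiv.Perm (Fin n)) :
    Equiv.Perm (Fin (m + n)) :=
  finSumFinEquiv.symm.trans ((Equiv.sumCongr α β).trans
    ((Equiv.sumComm (Fin m) (Fin n)).trans (finSumFinEquiv.trans (finCongr (Nat.add_comm n m)))))

section Pasting

variable {m n : ℕ}

@[simp]
lemma pasteLeft_castAdd (α : Equiv.Perm (Fin m)) (β : Equiv.Perm (Fin n)) (i : Fin m) :
    pasteLeft α β (Fin.castAdd n i) = Fin.cast (add_comm n m) (Fin.natAdd n (α i)) := by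
  ext; simp [pasteLeft]

@[simp]
lemma pasteLeft_natAdd (α : Equiv.Perm (Fin m)) (β : Equiv.Perm (Fin n)) (i : Fin n) :
    pasteLeft α β (Fin.natAdd m i) = Fin.cast (add_comm n m) (Fin.castAdd m (β i)) := by
  ext; simp [pasteLeft]

@[simp]
lemma pasteRight_castAdd (α : Equiv.Perm (Fin m)) (β : Equiv.Perm (Fin n)) (i : Fin m) :
    pasteRight α β (Fin.castAdd n i) = Fin.castAdd n (α i) := by
  simp [pasteRight]

@[simp]
lemma pasteRight_natAdd (α : Equiv.Perm (Fin m)) (β : Equiv.Perm (Fin n)) (i : Fin n) :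
    pasteRight α β (Fin.natAdd m i) = Fin.natAdd m (β i) := by
  simp [pasteRight]

lemma val_pasteLeft_lt_iff (α : Equiv.Perm (Fin m)) (β : Equiv.Perm (Fin n)) (x : Fin (m + n)) :
    (pasteLeft α β x : ℕ) < n ↔ m ≤ x := by
  induction x using Fin.addCases <;> simp

lemma pasteLeft_mul_pasteLeft (α β γ δ : Equiv.Perm (Fin m)) :
    pasteLeft α β * pasteLeft γ δ = pasteRight (β * γ) (α * δ) := by
  ext x
  induction x using Fin.addCases <;>
    simp only [Equiv.Perm.mul_apply, pasteLeft_castAdd, pasteLeft_natAdd, pasteRight_castAdd,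
      pasteRight_natAdd, Fin.cast_eq_self]

lemma orderOf_pasteRight (α : Equiv.Perm (Fin m)) (β : Equiv.Perm (Fin n)) :
    orderOf (pasteRight α β) = (orderOf α).lcm (orderOf β) := by
  rw [← Prod.orderOf (α, β), ← orderOf_injective _ Equiv.Perm.sumCongrHom_injective,
    ← finSumFinEquiv.permCongrHom.orderOf_eq]
  rfl

end Pasting

lemma Equiv.Perm.orderOf_eq_two_mul_orderOf_sq {X : Type*} [Nonempty X] {σ : Equiv.Perm X}
    (p : X → Prop) (hp : ∀ x, p (σ x) ↔ ¬ p x) : orderOf σ = 2 * orderOf (σ ^ 2) := by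
  have hpow : ∀ k x, p ((σ ^ k) x) ↔ (p x ↔ Even k) := by
    intro k x
    induction k with
    | zero => simp
    | succ k ih => rw [pow_succ', mul_apply, hp, ih, Nat.even_add_one]; tauto
  have heven : Even (orderOf σ) := by
    obtain ⟨x⟩ := ‹Nonempty X›
    have := hpow (orderOf σ) x
    rw [pow_orderOf_eq_one, one_apply] at this
    tauto
  rw [orderOf_pow_of_dvd two_ne_zero heven.two_dvd, Nat.mul_div_cancel' heven.two_dvd]

lemma orderOf_pasteLeft_one {m : ℕ} [NeZero m] (α : Equiv.Perm (Fin m)) :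
    orderOf (pasteLeft α (1 : Equiv.Perm (Fin m))) = 2 * orderOf α := by
  rw [Equiv.Perm.orderOf_eq_two_mul_orderOf_sq (fun x : Fin (m + m) ↦ (x : ℕ) < m)
      (fun x ↦ (val_pasteLeft_lt_iff α 1 x).trans not_lt.symm),
    pow_two, pasteLeft_mul_pasteLeft, one_mul, mul_one, orderOf_pasteRight, Nat.lcm_self]

lemma orderOf_finRotate (m : ℕ) : orderOf (finRotate (m + 1)) = m + 1 := by
  rcases m with _ | m
  · rw [Subsingleton.elim (finRotate 1) 1, orderOf_one]
  · rw [isCycle_finRotate.orderOf, support_finRotate, Finset.card_univ, Fintype.card_fin]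

/-- The `k`-th point (0-indexed) of the orbit `n → n-1 → n+1 → n-2 → ⋯ → 0 → 2n → n` of the
Stefan permutation on `Fin (2n+1)`. -/
def stefanPoint (n : ℕ) (k : Fin (2 * n + 1)) : Fin (2 * n + 1) :=
  ⟨if (k : ℕ) % 2 = 0 then n + k / 2 else n - (k + 1) / 2, by split_ifs <;> omega⟩

lemma stefanPoint_injective (n : ℕ) : Function.Injective (stefanPoint n) := by
  intro a b h
  have hval := congrArg Fin.val h
  simp only [stefanPoint] at hval
  ext
  split_ifs at hval <;> omega

/-- `α_{2n+1}` read on `Fin (2n+1)`, where `i` stands for the point `i + 1`. -/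
def IsStefanOrbit {n : ℕ} (α : Equiv.Perm (Fin (2 * n + 1))) : Prop :=
  ∀ i : Fin (2 * n + 1),
    (α i : ℕ) = if (i : ℕ) < n then 2 * n - i else if (i : ℕ) < 2 * n then 2 * n - 1 - i else n

lemma IsStefanOrbit.apply_stefanPoint {n : ℕ} {α : Equiv.Perm (Fin (2 * n + 1))}
    (hα : IsStefanOrbit α) (k : Fin (2 * n + 1)) :
    α (stefanPoint n k) = stefanPoint n (finRotate _ k) := by
  have hrot : (finRotate _ k : ℕ) = if (k : ℕ) = 2 * n then 0 else (k : ℕ) + 1 := by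
    have := coe_finRotate k
    simp only [Fin.ext_iff, Fin.val_last] at this
    exact this
  ext
  simp only [hα _, stefanPoint, hrot]
  split_ifs <;> omega

lemma IsStefanOrbit.orderOf_eq {n : ℕ} {α : Equiv.Perm (Fin (2 * n + 1))}
    (hα : IsStefanOrbit α) : orderOf α = 2 * n + 1 := by
  let e := Equiv.ofBijective (stefanPoint n) (stefanPoint_injective n).bijective_of_finite
  have hconj : α = e.permCongrHom (finRotate (2 * n + 1)) := by
    ext x
    obtain ⟨k, rfl⟩ := e.surjective x
    simp [e, hα.apply_stefanPoint]
  rw [hconj, MulEquiv.orderOf_eq, orderOf_finRotate]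

theorem pasteLeft_alpha_id_is_simple_general (n : ℕ)
    (α : Equiv.Perm (Fin (2 * n + 1)))
    (hα1 : ∀ i : Fin (2 * n + 1), 1 ≤ (i : ℕ) + 1 → (i : ℕ) + 1 ≤ n →
      (α i : ℕ) + 1 = 2 * n + 2 - ((i : ℕ) + 1))
    (hα2 : ∀ i : Fin (2 * n + 1), n + 1 ≤ (i : ℕ) + 1 → (i : ℕ) + 1 ≤ 2 * n →
      (α i : ℕ) + 1 = 2 * n + 1 - ((i : ℕ) + 1))
    (hα3 : ∀ i : Fin (2 * n + 1), (i : ℕ) + 1 = 2 * n + 1 → (α i : ℕ) + 1 = n + 1)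
    (θ : Equiv.Perm (Fin (4 * n + 2)))
    (hθ : θ = toPerm42 n (pasteLeft α (1 : Equiv.Perm (Fin (2 * n + 1))))) :
    ⇑θ '' {x : Fin (4 * n + 2) | (x : ℕ) < 2 * n + 1} =
        {x : Fin (4 * n + 2) | 2 * n + 1 ≤ (x : ℕ)} ∧
    ⇑θ '' {x : Fin (4 * n + 2) | 2 * n + 1 ≤ (x : ℕ)} =
        {x : Fin (4 * n + 2) | (x : ℕ) < 2 * n + 1} ∧
    θ ^ 2 = toPerm42 n (pasteRight α α) ∧
    orderOf θ = 4 * n + 2 := by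
  have hθconj : θ = (finCongr (by omega : 2 * n + 1 + (2 * n + 1) = 4 * n + 2)).permCongrHom
      (pasteLeft α 1) := hθ
  have hswap : ∀ x, (θ x : ℕ) < 2 * n + 1 ↔ 2 * n + 1 ≤ (x : ℕ) := by
    subst hθ
    exact fun x ↦ val_pasteLeft_lt_iff α 1 _
  have himage : ∀ S T : Set (Fin (4 * n + 2)), (∀ x, θ x ∈ T ↔ x ∈ S) → θ '' S = T := by
    intro S T h
    rw [← θ.image_preimage T]
    exact congrArg _ (Set.ext fun x ↦ (h x).symm)
  have hα : IsStefanOrbit α := by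
    intro i
    split_ifs with hlow hmid
    · have := hα1 i (by omega) (by omega); omega
    · have := hα2 i (by omega) (by omega); omega
    · have := hα3 i (by omega); omega
  refine ⟨himage _ _ fun x ↦ ?_, himage _ _ hswap, ?_, ?_⟩
  · have := hswap x
    show 2 * n + 1 ≤ (θ x : ℕ) ↔ (x : ℕ) < 2 * n + 1
    omega
  · rw [hθconj, ← map_pow, pow_two, pasteLeft_mul_pasteLeft, one_mul, mul_one]
    rfl
  · rw [hθconj, MulEquiv.orderOf_eq, orderOf_pasteLeft_one, hα.orderOf_eq]
    ring

/-- `θ = α_{2n+1} |◇ Id_{2n+1}` is a simple permutation of mixed order `4n+2`: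
(i) `θ` maps `{1,…,2n+1}` onto `{2n+2,…,4n+2}` and vice versa;
(ii) `θ² = α_{2n+1} ◇| α_{2n+1}`; (iii) `orderOf θ = 4n+2`.
The Stefan orbit `α = α_{2n+1}` is characterized 1-indexed by the hypotheses
(`i : Fin (2*n+1)` represents the point `(i : ℕ) + 1`). -/
theorem pasteLeft_alpha_id_is_simple (n : ℕ) (hn : 1 ≤ n)
    (α : Equiv.Perm (Fin (2 * n + 1)))
    (hα1 : ∀ i : Fin (2 * n + 1), 1 ≤ (i : ℕ) + 1 → (i : ℕ) + 1 ≤ n →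
      (α i : ℕ) + 1 = 2 * n + 2 - ((i : ℕ) + 1))
    (hα2 : ∀ i : Fin (2 * n + 1), n + 1 ≤ (i : ℕ) + 1 → (i : ℕ) + 1 ≤ 2 * n →
      (α i : ℕ) + 1 = 2 * n + 1 - ((i : ℕ) + 1))
    (hα3 : ∀ i : Fin (2 * n + 1), (i : ℕ) + 1 = 2 * n + 1 → (α i : ℕ) + 1 = n + 1)
    (θ : Equiv.Perm (Fin (4 * n + 2)))
    (hθ : θ = toPerm42 n (pasteLeft α (1 : Equiv.Perm (Fin (2 * n + 1))))) :
    ⇑θ '' {x : Fin (4 * n + 2) | (x : ℕ) < 2 * n + 1} =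
        {x : Fin (4 * n + 2) | 2 * n + 1 ≤ (x : ℕ)} ∧
    ⇑θ '' {x : Fin (4 * n + 2) | 2 * n + 1 ≤ (x : ℕ)} =
        {x : Fin (4 * n + 2) | (x : ℕ) < 2 * n + 1} ∧
    θ ^ 2 = toPerm42 n (pasteRight α α) ∧
    orderOf θ = 4 * n + 2 :=
  pasteLeft_alpha_id_is_simple_general n α hα1 hα2 hα3 θ hθ
end

section
/- Let n ≥ 1 and let θ = Id_{2n+1} |◇ β_{2n+1} be the left pasting of the identity permutation of {1,…,2n+1} with the Stefan orbit β_{2n+1}. Then θ is a simple permutation of mixed order 4n+2; concretely: (i) θ maps the set {1,…,2n+1} onto the set {2n+2,…,4n+2} and maps {2n+2,…,4n+2} onto {1,…,2n+1}; (ii) θ² = β_{2n+1} ◇| β_{2n+1}; (iii) the order of θ is 4n+2. -/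
lemma pasteLeft_val_lt {m k : ℕ} (α : Equiv.Perm (Fin m)) (b : Equiv.Perm (Fin k))
    (x : Fin (m + k)) (hx : (x : ℕ) < m) :
    (pasteLeft α b x : ℕ) = (α ⟨(x : ℕ), hx⟩ : ℕ) + k := by
  have hs : finSumFinEquiv.symm x = Sum.inl ⟨(x : ℕ), hx⟩ := by
    rw [Equiv.symm_apply_eq, finSumFinEquiv_apply_left]
    ext; rfl
  simp [pasteLeft, hs, Nat.add_comm]

lemma pasteLeft_val_ge {m k : ℕ} (α : Equiv.Perm (Fin m)) (b : Equiv.Perm (Fin k))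
    (x : Fin (m + k)) (hx : m ≤ (x : ℕ)) (h2 : (x : ℕ) - m < k) :
    (pasteLeft α b x : ℕ) = (b ⟨(x : ℕ) - m, h2⟩ : ℕ) := by
  have hs : finSumFinEquiv.symm x = Sum.inr ⟨(x : ℕ) - m, h2⟩ := by
    rw [Equiv.symm_apply_eq, finSumFinEquiv_apply_right]
    ext; simp [Fin.natAdd]; omega
  simp [pasteLeft, hs]

lemma pasteRight_val_lt {m k : ℕ} (α : Equiv.Perm (Fin m)) (b : Equiv.Perm (Fin k))
    (x : Fin (m + k)) (hx : (x : ℕ) < m) :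
    (pasteRight α b x : ℕ) = (α ⟨(x : ℕ), hx⟩ : ℕ) := by
  have hs : finSumFinEquiv.symm x = Sum.inl ⟨(x : ℕ), hx⟩ := by
    rw [Equiv.symm_apply_eq, finSumFinEquiv_apply_left]
    ext; rfl
  simp [pasteRight, hs]

lemma pasteRight_val_ge {m k : ℕ} (α : Equiv.Perm (Fin m)) (b : Equiv.Perm (Fin k))
    (x : Fin (m + k)) (hx : m ≤ (x : ℕ)) (h2 : (x : ℕ) - m < k) :
    (pasteRight α b x : ℕ) = m + (b ⟨(x : ℕ) - m, h2⟩ : ℕ) := by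
  have hs : finSumFinEquiv.symm x = Sum.inr ⟨(x : ℕ) - m, h2⟩ := by
    rw [Equiv.symm_apply_eq, finSumFinEquiv_apply_right]
    ext; simp [Fin.natAdd]; omega
  simp [pasteRight, hs]

lemma toPerm42_val (n : ℕ) (σ : Equiv.Perm (Fin (2 * n + 1 + (2 * n + 1))))
    (x : Fin (4 * n + 2)) (h : (x : ℕ) < 2 * n + 1 + (2 * n + 1)) :
    ((toPerm42 n σ) x : ℕ) = (σ ⟨(x : ℕ), h⟩ : ℕ) := rfl

/-- The conjugating map (forward direction). -/
def stefanF (n : ℕ) (k : Fin (2 * n + 1)) : Fin (2 * n + 1) :=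
  if (k : ℕ) = 0 then k
  else if (k : ℕ) % 2 = 1 then ⟨n - ((k : ℕ) - 1) / 2, by omega⟩
  else ⟨n + (k : ℕ) / 2, by have := k.isLt; omega⟩

/-- The conjugating map (backward direction). -/
def stefanG (n : ℕ) (v : Fin (2 * n + 1)) : Fin (2 * n + 1) :=
  if h0 : (v : ℕ) = 0 then v
  else if (v : ℕ) ≤ n then ⟨2 * (n - (v : ℕ)) + 1, by omega⟩
  else ⟨2 * ((v : ℕ) - n), by have := v.isLt; omega⟩

lemma stefanF_val (n : ℕ) (k : Fin (2 * n + 1)) : (stefanF n k : ℕ) =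
    if (k : ℕ) = 0 then (k : ℕ)
    else if (k : ℕ) % 2 = 1 then n - ((k : ℕ) - 1) / 2
    else n + (k : ℕ) / 2 := by
  unfold stefanF; split_ifs <;> rfl

lemma stefanG_val (n : ℕ) (v : Fin (2 * n + 1)) : (stefanG n v : ℕ) =
    if (v : ℕ) = 0 then (v : ℕ)
    else if (v : ℕ) ≤ n then 2 * (n - (v : ℕ)) + 1
    else 2 * ((v : ℕ) - n) := by
  unfold stefanG; split_ifs <;> rfl

/-- The conjugating permutation. -/
def stefanConj (n : ℕ) : Equiv.Perm (Fin (2 * n + 1)) where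
  toFun := stefanF n
  invFun := stefanG n
  left_inv k := by
    have hk := k.isLt
    ext
    rw [stefanG_val, stefanF_val]
    split_ifs <;> first | contradiction | omega
  right_inv v := by
    have hv := v.isLt
    ext
    rw [stefanF_val, stefanG_val]
    split_ifs <;> first | contradiction | omega

lemma rotval (n : ℕ) (k : Fin (2 * n + 1)) :
    ((finRotate (2 * n + 1)) k : ℕ) = if (k : ℕ) = 2 * n then 0 else (k : ℕ) + 1 := by
  rw [finRotate_succ_apply, Fin.val_add_one]
  by_cases h : k = Fin.last (2 * n)
  · simp [h]
  · rw [if_neg h, if_neg]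
    simpa [Fin.ext_iff] using h

lemma orderOf_beta (n : ℕ) (hn : 1 ≤ n)
    (β : Equiv.Perm (Fin (2 * n + 1)))
    (hβ1 : ∀ i : Fin (2 * n + 1), (i : ℕ) + 1 = 1 → (β i : ℕ) + 1 = n + 1)
    (hβ2 : ∀ i : Fin (2 * n + 1), 2 ≤ (i : ℕ) + 1 → (i : ℕ) + 1 ≤ n + 1 →
      (β i : ℕ) + 1 = 2 * n + 3 - ((i : ℕ) + 1))
    (hβ3 : ∀ i : Fin (2 * n + 1), n + 2 ≤ (i : ℕ) + 1 → (i : ℕ) + 1 ≤ 2 * n + 1 →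
      (β i : ℕ) + 1 = 2 * n + 2 - ((i : ℕ) + 1)) :
    orderOf β = 2 * n + 1 := by
  set c := stefanConj n with hc
  set r := finRotate (2 * n + 1) with hrr
  have key : ∀ k : Fin (2 * n + 1), β (c k) = c (r k) := by
    intro k
    have hk := k.isLt
    have hck : (c k : ℕ) = _ := stefanF_val n k
    have hrk : (r k : ℕ) = _ := rotval n k
    have hcrk : (c (r k) : ℕ) = _ := stefanF_val n (r k)
    apply Fin.ext
    by_cases h0 : (k : ℕ) = 0
    · have h := hβ1 (c k) (by split_ifs at hck <;> omega)
      split_ifs at hck hrk hcrk <;> omega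
    · by_cases h1 : (k : ℕ) % 2 = 1
      · have h := hβ2 (c k) (by split_ifs at hck <;> omega) (by split_ifs at hck <;> omega)
        split_ifs at hck hrk hcrk <;> omega
      · have h := hβ3 (c k) (by split_ifs at hck <;> omega) (by split_ifs at hck <;> omega)
        split_ifs at hck hrk hcrk <;> omega
  have hmul : β * c = c * r := Equiv.ext fun k => by
    simpa [Equiv.Perm.mul_apply] using key k
  have hconj : β = c * r * c⁻¹ := by
    rw [eq_mul_inv_iff_mul_eq, hmul]
  have horderR : orderOf r = 2 * n + 1 := by
    rw [hrr, (isCycle_finRotate_of_le (by omega)).orderOf,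
      support_finRotate_of_le (by omega), Finset.card_univ, Fintype.card_fin]
  rw [hconj, ← MulAut.conj_apply, (MulAut.conj c).orderOf_eq, horderR]

/-- `θ = Id_{2n+1} |◇ β_{2n+1}` is a simple permutation of mixed order `4n+2`:
(i) `θ` maps `{1,…,2n+1}` onto `{2n+2,…,4n+2}` and vice versa;
(ii) `θ² = β_{2n+1} ◇| β_{2n+1}`; (iii) `orderOf θ = 4n+2`.
The Stefan orbit `β = β_{2n+1}` is characterized 1-indexed by the hypotheses
(`i : Fin (2*n+1)` represents the point `(i : ℕ) + 1`). -/
theorem pasteLeft_id_beta_is_simple (n : ℕ) (hn : 1 ≤ n)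
    (β : Equiv.Perm (Fin (2 * n + 1)))
    (hβ1 : ∀ i : Fin (2 * n + 1), (i : ℕ) + 1 = 1 → (β i : ℕ) + 1 = n + 1)
    (hβ2 : ∀ i : Fin (2 * n + 1), 2 ≤ (i : ℕ) + 1 → (i : ℕ) + 1 ≤ n + 1 →
      (β i : ℕ) + 1 = 2 * n + 3 - ((i : ℕ) + 1))
    (hβ3 : ∀ i : Fin (2 * n + 1), n + 2 ≤ (i : ℕ) + 1 → (i : ℕ) + 1 ≤ 2 * n + 1 →
      (β i : ℕ) + 1 = 2 * n + 2 - ((i : ℕ) + 1))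
    (θ : Equiv.Perm (Fin (4 * n + 2)))
    (hθ : θ = toPerm42 n (pasteLeft (1 : Equiv.Perm (Fin (2 * n + 1))) β)) :
    ⇑θ '' {x : Fin (4 * n + 2) | (x : ℕ) < 2 * n + 1} =
        {x : Fin (4 * n + 2) | 2 * n + 1 ≤ (x : ℕ)} ∧
    ⇑θ '' {x : Fin (4 * n + 2) | 2 * n + 1 ≤ (x : ℕ)} =
        {x : Fin (4 * n + 2) | (x : ℕ) < 2 * n + 1} ∧
    θ ^ 2 = toPerm42 n (pasteRight β β) ∧
    orderOf θ = 4 * n + 2 := by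
  have horder := orderOf_beta n hn β hβ1 hβ2 hβ3
  have hβpow : β ^ (2 * n + 1) = 1 := by
    have := pow_orderOf_eq_one β
    rwa [horder] at this
  -- apply formulas for θ
  have hT1 : ∀ x : Fin (4 * n + 2), (x : ℕ) < 2 * n + 1 → (θ x : ℕ) = (x : ℕ) + (2 * n + 1) := by
    intro x hx
    have h4 := x.isLt
    rw [hθ, toPerm42_val n _ x (by omega), pasteLeft_val_lt (m := 2 * n + 1) (k := 2 * n + 1) _ _ _ hx]
    simp
  have hT2 : ∀ x : Fin (4 * n + 2), 2 * n + 1 ≤ (x : ℕ) →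
      ∀ h2 : (x : ℕ) - (2 * n + 1) < 2 * n + 1,
      (θ x : ℕ) = (β ⟨(x : ℕ) - (2 * n + 1), h2⟩ : ℕ) := by
    intro x hx h2
    have h4 := x.isLt
    rw [hθ, toPerm42_val n _ x (by omega), pasteLeft_val_ge (m := 2 * n + 1) (k := 2 * n + 1) _ _ _ hx h2]
  set P := toPerm42 n (pasteRight β β) with hPdef
  have hP1 : ∀ x : Fin (4 * n + 2), ∀ hx : (x : ℕ) < 2 * n + 1,
      (P x : ℕ) = (β ⟨(x : ℕ), hx⟩ : ℕ) := by
    intro x hx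
    have h4 := x.isLt
    rw [hPdef, toPerm42_val n _ x (by omega), pasteRight_val_lt (m := 2 * n + 1) (k := 2 * n + 1) _ _ _ hx]
  have hP2 : ∀ x : Fin (4 * n + 2), 2 * n + 1 ≤ (x : ℕ) →
      ∀ h2 : (x : ℕ) - (2 * n + 1) < 2 * n + 1,
      (P x : ℕ) = 2 * n + 1 + (β ⟨(x : ℕ) - (2 * n + 1), h2⟩ : ℕ) := by
    intro x hx h2
    have h4 := x.isLt
    rw [hPdef, toPerm42_val n _ x (by omega), pasteRight_val_ge (m := 2 * n + 1) (k := 2 * n + 1) _ _ _ hx h2]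
  -- (ii): θ² = β ◇| β
  have hsq : θ ^ 2 = P := by
    apply Equiv.ext
    intro x
    have h4 := x.isLt
    apply Fin.ext
    rw [sq, Equiv.Perm.mul_apply]
    by_cases hx : (x : ℕ) < 2 * n + 1
    · have h1 := hT1 x hx
      have hge : 2 * n + 1 ≤ ((θ x : Fin (4 * n + 2)) : ℕ) := by omega
      have h2 : ((θ x : Fin (4 * n + 2)) : ℕ) - (2 * n + 1) < 2 * n + 1 := by omega
      rw [hT2 (θ x) hge h2, hP1 x hx]
      congr 2
      apply Fin.ext
      simp only []
      omega
    · push_neg at hx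
      have h2 : (x : ℕ) - (2 * n + 1) < 2 * n + 1 := by omega
      have h1 := hT2 x hx h2
      have hlt : ((θ x : Fin (4 * n + 2)) : ℕ) < 2 * n + 1 := by
        rw [h1]; exact (β _).isLt
      rw [hT1 (θ x) hlt, hP2 x hx h2, h1, Nat.add_comm]
  -- powers of P
  have hPpow1 : ∀ (k : ℕ) (x : Fin (4 * n + 2)) (hx : (x : ℕ) < 2 * n + 1),
      ((P ^ k) x : ℕ) = ((β ^ k) ⟨(x : ℕ), hx⟩ : ℕ) := by
    intro k
    induction k with
    | zero => intro x hx; simp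
    | succ k ih =>
      intro x hx
      have h1 := hP1 x hx
      have hlt : ((P x : Fin (4 * n + 2)) : ℕ) < 2 * n + 1 := by
        rw [h1]; exact (β _).isLt
      rw [pow_succ, Equiv.Perm.mul_apply, ih (P x) hlt, pow_succ, Equiv.Perm.mul_apply]
      congr 2
      apply Fin.ext
      exact h1
  have hPpow2 : ∀ (k : ℕ) (x : Fin (4 * n + 2)) (hx : 2 * n + 1 ≤ (x : ℕ))
      (h2 : (x : ℕ) - (2 * n + 1) < 2 * n + 1),
      ((P ^ k) x : ℕ) = 2 * n + 1 + ((β ^ k) ⟨(x : ℕ) - (2 * n + 1), h2⟩ : ℕ) := by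
    intro k
    induction k with
    | zero => intro x hx h2; simp; omega
    | succ k ih =>
      intro x hx h2
      have h1 := hP2 x hx h2
      have hge : 2 * n + 1 ≤ ((P x : Fin (4 * n + 2)) : ℕ) := by omega
      have hlt : ((P x : Fin (4 * n + 2)) : ℕ) - (2 * n + 1) < 2 * n + 1 := by
        have := (β (⟨(x : ℕ) - (2 * n + 1), h2⟩ : Fin (2 * n + 1))).isLt
        omega
      rw [pow_succ, Equiv.Perm.mul_apply, ih (P x) hge hlt, pow_succ, Equiv.Perm.mul_apply]
      congr 3
      apply Fin.ext
      simp only []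
      omega
  -- P^e = 1 forces β^e = 1
  have hPordpow : ∀ e : ℕ, P ^ e = 1 → β ^ e = 1 := by
    intro e he
    apply Equiv.ext
    intro y
    have hy := y.isLt
    have hx : ((⟨(y : ℕ), by omega⟩ : Fin (4 * n + 2)) : ℕ) < 2 * n + 1 := hy
    have hv := hPpow1 e ⟨(y : ℕ), by omega⟩ hx
    rw [he] at hv
    have hyy : (⟨((⟨(y : ℕ), by omega⟩ : Fin (4 * n + 2)) : ℕ), hx⟩ : Fin (2 * n + 1)) = y := rfl
    rw [hyy] at hv
    apply Fin.ext
    simp only [Equiv.Perm.one_apply] at hv ⊢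
    omega
  -- θ^(4n+2) = 1
  have hPN : P ^ (2 * n + 1) = 1 := by
    apply Equiv.ext
    intro x
    have h4 := x.isLt
    apply Fin.ext
    by_cases hx : (x : ℕ) < 2 * n + 1
    · rw [hPpow1 _ x hx, hβpow]
      simp
    · push_neg at hx
      have h2 : (x : ℕ) - (2 * n + 1) < 2 * n + 1 := by omega
      rw [hPpow2 _ x hx h2, hβpow]
      simp only [Equiv.Perm.one_apply]
      omega
  have hθ2N : θ ^ (4 * n + 2) = 1 := by
    have h1 : θ ^ (2 * (2 * n + 1)) = 1 := by rw [pow_mul, hsq, hPN]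
    have h2 : 2 * (2 * n + 1) = 4 * n + 2 := by ring
    rwa [h2] at h1
  have hdvd : orderOf θ ∣ 4 * n + 2 := orderOf_dvd_of_pow_eq_one hθ2N
  -- θ^(2n+1) ≠ 1
  have hθN : θ ^ (2 * n + 1) ≠ 1 := by
    intro hcon
    have h0lt : ((0 : Fin (4 * n + 2)) : ℕ) < 2 * n + 1 := by
      simp [Fin.val_zero]
    have e1 : θ ^ (2 * n + 1) = (θ ^ 2) ^ n * θ := by
      rw [← pow_mul, ← pow_succ]
    have hv : ((θ ^ (2 * n + 1)) 0 : ℕ) = ((P ^ n) (θ 0) : ℕ) := by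
      rw [e1, hsq, Equiv.Perm.mul_apply]
    have ht0 := hT1 0 h0lt
    have h4 := (θ (0 : Fin (4 * n + 2))).isLt
    have hge : 2 * n + 1 ≤ ((θ (0 : Fin (4 * n + 2))) : ℕ) := by omega
    have h2 : ((θ (0 : Fin (4 * n + 2))) : ℕ) - (2 * n + 1) < 2 * n + 1 := by omega
    have hval := hPpow2 n (θ 0) hge h2
    rw [hcon] at hv
    simp only [Equiv.Perm.one_apply, Fin.val_zero] at hv
    omega
  -- conclude the order computation
  have hordθ : orderOf θ = 4 * n + 2 := by
    rcases Nat.even_or_odd (orderOf θ) with he | ho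
    · obtain ⟨e, hde⟩ := he
      have hd2 : orderOf θ = 2 * e := by omega
      have hedvd : e ∣ 2 * n + 1 := by
        have h2e : 2 * e ∣ 2 * (2 * n + 1) := by
          rw [← hd2, show 2 * (2 * n + 1) = 4 * n + 2 by ring]
          exact hdvd
        exact (mul_dvd_mul_iff_left (two_ne_zero)).mp h2e
      have hθe : P ^ e = 1 := by
        have hpθ : θ ^ orderOf θ = 1 := pow_orderOf_eq_one θ
        rw [hd2, pow_mul, hsq] at hpθ
        exact hpθ
      have hβe : β ^ e = 1 := hPordpow e hθe
      have hNe : 2 * n + 1 ∣ e := horder ▸ orderOf_dvd_of_pow_eq_one hβe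
      have he2 : e = 2 * n + 1 := Nat.dvd_antisymm hedvd hNe
      omega
    · exfalso
      have hco : Nat.Coprime (orderOf θ) 2 := Nat.coprime_two_right.mpr ho
      have hdN : orderOf θ ∣ 2 * n + 1 := by
        refine hco.dvd_of_dvd_mul_right ?_
        rw [show (2 * n + 1) * 2 = 4 * n + 2 by ring]
        exact hdvd
      exact hθN (orderOf_dvd_iff_pow_eq_one.mp hdN)
  -- the image statements
  have himg1 : ⇑θ '' {x : Fin (4 * n + 2) | (x : ℕ) < 2 * n + 1} =
      {x : Fin (4 * n + 2) | 2 * n + 1 ≤ (x : ℕ)} := by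
    ext y
    simp only [Set.mem_image, Set.mem_setOf_eq]
    constructor
    · rintro ⟨x, hx, rfl⟩
      have := hT1 x hx
      omega
    · intro hy
      refine ⟨θ.symm y, ?_, θ.apply_symm_apply y⟩
      by_contra h
      push_neg at h
      have h4 := (θ.symm y).isLt
      have h2 : ((θ.symm y : Fin (4 * n + 2)) : ℕ) - (2 * n + 1) < 2 * n + 1 := by omega
      have hval := hT2 (θ.symm y) h h2
      rw [θ.apply_symm_apply] at hval
      have hb := (β (⟨((θ.symm y : Fin (4 * n + 2)) : ℕ) - (2 * n + 1), h2⟩ : Fin (2 * n + 1))).isLt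
      omega
  have himg2 : ⇑θ '' {x : Fin (4 * n + 2) | 2 * n + 1 ≤ (x : ℕ)} =
      {x : Fin (4 * n + 2) | (x : ℕ) < 2 * n + 1} := by
    ext y
    simp only [Set.mem_image, Set.mem_setOf_eq]
    constructor
    · rintro ⟨x, hx, rfl⟩
      have h4 := x.isLt
      have h2 : (x : ℕ) - (2 * n + 1) < 2 * n + 1 := by omega
      have := hT2 x hx h2
      have hb := (β (⟨(x : ℕ) - (2 * n + 1), h2⟩ : Fin (2 * n + 1))).isLt
      omega
    · intro hy
      refine ⟨θ.symm y, ?_, θ.apply_symm_apply y⟩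
      by_contra h
      push_neg at h
      have hval := hT1 (θ.symm y) h
      rw [θ.apply_symm_apply] at hval
      omega
  exact ⟨himg1, himg2, hsq, hordθ⟩
end

section
/- The recursively pasted permutations of order a power of two: define θ₀ to be the identity permutation of {1} and, for k ≥ 0, define θ_{k+1} to be the left pasting e_{2^k} |◇ θ_k, where e_{2^k} is the identity permutation of {1,…,2^k}; thus θ_{k+1} is a permutation of {1,…,2^{k+1}} with θ_{k+1}(i) = i + 2^k for 1 ≤ i ≤ 2^k and θ_{k+1}(2^k + i) = θ_k(i) for 1 ≤ i ≤ 2^k. Then for every k ≥ 0 the order of θ_k equals 2^k. -/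
/-- The recursively pasted permutations `θ_k` of order a power of two:
`θ₀ = Id_{1}` and `θ_{k+1} = e_{2^k} |◇ θ_k`, where `e_{2^k}` is the identity
permutation of `{1,…,2^k}`.  Thus `θ_{k+1}(i) = i + 2^k` for `1 ≤ i ≤ 2^k` and
`θ_{k+1}(2^k + i) = θ_k(i)` for `1 ≤ i ≤ 2^k`. -/
def thetaPow2 : (k : ℕ) → Equiv.Perm (Fin (2 ^ k))
  | 0 => 1
  | k + 1 =>
    (finCongr (((pow_succ 2 k).trans (mul_two (2 ^ k))).symm : 2 ^ k + 2 ^ k = 2 ^ (k + 1))).permCongr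
      (pasteLeft (1 : Equiv.Perm (Fin (2 ^ k))) (thetaPow2 k))

open Equiv

/-- `permCongr` as a `MulEquiv`. -/
def permMulEquiv {α β : Type*} (e : α ≃ β) : Perm α ≃* Perm β :=
  { Equiv.permCongr e with
    map_mul' := fun σ τ => by ext x; simp [Equiv.permCongr_apply, Equiv.Perm.mul_apply] }

lemma orderOf_permCongr {α β : Type*} (e : α ≃ β) (σ : Perm α) :
    orderOf (e.permCongr σ) = orderOf σ :=
  (permMulEquiv e).orderOf_eq σ

/-- The "swap then act" permutation on `α ⊕ α`. -/
def swapAct {α : Type*} (β : Perm α) : Perm (α ⊕ α) :=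
  (Equiv.sumCongr (1 : Perm α) β).trans (Equiv.sumComm α α)

lemma swapAct_sq {α : Type*} (β : Perm α) :
    swapAct β ^ 2 = Equiv.Perm.sumCongrHom α α (β, β) := by
  ext x
  rcases x with x | x <;>
    simp [swapAct, pow_succ, Equiv.Perm.mul_apply, Equiv.Perm.sumCongrHom]

lemma orderOf_swapAct {α : Type*} [Nonempty α] (β : Perm α) {k : ℕ}
    (h : orderOf β = 2 ^ k) : orderOf (swapAct β) = 2 ^ (k + 1) := by
  have hsq : orderOf (swapAct β ^ 2) = 2 ^ k := by
    rw [swapAct_sq, orderOf_injective _ Equiv.Perm.sumCongrHom_injective, Prod.orderOf_mk,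
      Nat.lcm_self, h]
  have hdvd : orderOf (swapAct β) ∣ 2 ^ (k + 1) := by
    rw [orderOf_dvd_iff_pow_eq_one, pow_succ, mul_comm, pow_mul, ← hsq,
      pow_orderOf_eq_one]
  have hdvd' : 2 ^ k ∣ orderOf (swapAct β) := hsq ▸ orderOf_pow_dvd 2
  rcases (Nat.dvd_prime_pow Nat.prime_two).mp hdvd with ⟨j, hj, hje⟩
  have hk : k ≤ j := ((Nat.pow_dvd_pow_iff_le_right one_lt_two).mp (hje ▸ hdvd'))
  have hj' : j = k ∨ j = k + 1 := by omega
  rcases hj' with h' | h' <;> rw [h'] at hje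
  · -- orderOf swapAct β = 2 ^ k : contradiction
    exfalso
    have h1 : swapAct β ^ 2 ^ k = 1 := hje ▸ pow_orderOf_eq_one _
    rcases Nat.eq_zero_or_pos k with rfl | hkpos
    · rw [pow_zero, pow_one] at h1
      have := Equiv.congr_fun h1 (Sum.inl (Classical.arbitrary α))
      simp [swapAct] at this
    · have : 2 ^ k = 2 * 2 ^ (k - 1) := by
        rw [← pow_succ']; congr 1; omega
      rw [this, pow_mul, ← orderOf_dvd_iff_pow_eq_one, hsq] at h1
      exact absurd ((Nat.pow_dvd_pow_iff_le_right one_lt_two).mp h1) (by omega)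
  · exact hje

lemma pasteLeft_one_eq {n : ℕ} (β : Perm (Fin n)) :
    pasteLeft 1 β = (finSumFinEquiv (m := n) (n := n)).permCongr (swapAct β) := by
  ext x
  simp [pasteLeft, swapAct, Equiv.permCongr_apply]

lemma orderOf_pasteLeft_one_s14 {n : ℕ} [NeZero n] (β : Perm (Fin n)) {k : ℕ}
    (h : orderOf β = 2 ^ k) : orderOf (pasteLeft (1 : Perm (Fin n)) β) = 2 ^ (k + 1) := by
  rw [pasteLeft_one_eq, orderOf_permCongr, orderOf_swapAct β h]

/-- For every `k ≥ 0`, the order of `θ_k` is `2^k`. -/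
theorem orderOf_thetaPow2 (k : ℕ) : orderOf (thetaPow2 k) = 2 ^ k := by
  induction k with
  | zero => simp [thetaPow2]
  | succ k ih =>
    rw [thetaPow2, orderOf_permCongr, orderOf_pasteLeft_one_s14 _ ih]
end

section
/- Simplicity of the recursively pasted permutations: define θ₀ to be the identity permutation of {1} and, for k ≥ 0, define θ_{k+1} to be the permutation of {1,…,2^{k+1}} with θ_{k+1}(i) = i + 2^k for 1 ≤ i ≤ 2^k and θ_{k+1}(2^k + i) = θ_k(i) for 1 ≤ i ≤ 2^k. Then for every k and every j with 0 ≤ j ≤ k, the permutation θ_k^(2^j) maps each block P(2^k, 2^j, i) = {(i−1)·2^{k−j}+1, …, i·2^{k−j}} (for 1 ≤ i ≤ 2^j) onto itself, and for every j with 0 ≤ j < k, θ_k^(2^j) maps each block P(2^k, 2^{j+1}, i) (of size 2^{k−j−1}) onto a set disjoint from it. -/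
/-- The `i`-th block `P(2^k, 2^j, i)` (for `1 ≤ i ≤ 2^j`) of the partition of `{1,…,2^k}`
into `2^j` consecutive intervals of length `2^(k−j)`, i.e. `{(i−1)·2^(k−j)+1, …, i·2^(k−j)}`.
Here `x : Fin (2^k)` represents the point `(x : ℕ) + 1`. -/
def block (k j i : ℕ) : Set (Fin (2 ^ k)) :=
  {x : Fin (2 ^ k) | (i - 1) * 2 ^ (k - j) ≤ (x : ℕ) ∧ (x : ℕ) < i * 2 ^ (k - j)}

/-!
Read `θ_k` as a permutation of `ℕ` acting blockwise on the intervals of length `2^k`. Then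
`θ_{k+1}` exchanges the two halves of each interval of length `2^(k+1)`, and `θ_{k+1}²` acts as
`θ_k` on each half. Iterating, `θ_k^(2^j)` acts as `θ_(k-j)` on each block of length `2^(k-j)`:
it preserves these blocks and exchanges the two halves of each of them.
-/

lemma val_pasteLeft_castAdd {m n : ℕ} (α : Equiv.Perm (Fin m)) (β : Equiv.Perm (Fin n))
    (x : Fin m) : (pasteLeft α β (Fin.castAdd n x) : ℕ) = α x + n := by
  simp [pasteLeft]

lemma val_pasteLeft_natAdd {m n : ℕ} (α : Equiv.Perm (Fin m)) (β : Equiv.Perm (Fin n))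
    (x : Fin n) : (pasteLeft α β (Fin.natAdd m x) : ℕ) = β x := by
  simp [pasteLeft]

/-- `thetaNat k` acts as `θ_k` on every block `[q 2^k, (q+1) 2^k)` of `ℕ`; the test
`n / 2^k % 2 = 0` says that `n` lies in the lower half of its block of length `2^(k+1)`. -/
def thetaNat : ℕ → ℕ → ℕ
  | 0, n => n
  | k + 1, n => if n / 2 ^ k % 2 = 0 then n + 2 ^ k else thetaNat k (n - 2 ^ k)

lemma val_thetaPow2 (k : ℕ) (x : Fin (2 ^ k)) : (thetaPow2 k x : ℕ) = thetaNat k x := by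
  induction k with
  | zero => simp [thetaPow2, thetaNat]
  | succ k ih =>
    suffices h : ∀ y : Fin (2 ^ k + 2 ^ k),
        (pasteLeft 1 (thetaPow2 k) y : ℕ) = thetaNat (k + 1) y from
      h (Fin.cast (by ring) x)
    intro y
    induction y using Fin.addCases with
    | left y =>
      rw [val_pasteLeft_castAdd]
      simp [thetaNat, Nat.div_eq_of_lt y.isLt]
    | right y =>
      rw [val_pasteLeft_natAdd, ih]
      simp [thetaNat, Nat.div_eq_of_lt y.isLt]

lemma le_of_div_mod_two_ne_zero {n p : ℕ} (h : n / p % 2 ≠ 0) : p ≤ n := by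
  by_contra hlt
  exact h (by rw [Nat.div_eq_of_lt (not_le.mp hlt)])

lemma sub_div_eq_div_sub_one {n p : ℕ} (hp : 0 < p) (h : p ≤ n) : (n - p) / p = n / p - 1 := by
  have hsucc := Nat.add_div_right (n - p) hp
  rw [Nat.sub_add_cancel h] at hsucc
  rw [hsucc, Nat.add_sub_cancel]

lemma thetaNat_div_two_pow (k n : ℕ) : thetaNat k n / 2 ^ k = n / 2 ^ k := by
  induction k generalizing n with
  | zero => rfl
  | succ k ih =>
    have hP := Nat.two_pow_pos k
    rw [pow_succ, ← Nat.div_div_eq_div_mul, ← Nat.div_div_eq_div_mul, thetaNat]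
    split_ifs with h
    · rw [Nat.add_div_right _ hP]
      omega
    · rw [ih, sub_div_eq_div_sub_one hP (le_of_div_mod_two_ne_zero h)]
      generalize n / 2 ^ k = q at *
      omega

lemma thetaNat_succ_div_two_pow (k n : ℕ) :
    thetaNat (k + 1) n / 2 ^ k = if n / 2 ^ k % 2 = 0 then n / 2 ^ k + 1 else n / 2 ^ k - 1 := by
  rw [thetaNat]
  split_ifs with h
  · exact Nat.add_div_right _ (Nat.two_pow_pos k)
  · rw [thetaNat_div_two_pow,
      sub_div_eq_div_sub_one (Nat.two_pow_pos k) (le_of_div_mod_two_ne_zero h)]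

lemma thetaNat_succ_div_two_pow_ne (k n : ℕ) : thetaNat (k + 1) n / 2 ^ k ≠ n / 2 ^ k := by
  rw [thetaNat_succ_div_two_pow]
  generalize n / 2 ^ k = q
  split_ifs <;> omega

lemma thetaNat_add_two_pow (k n : ℕ) : thetaNat k (n + 2 ^ k) = thetaNat k n + 2 ^ k := by
  induction k generalizing n with
  | zero => rfl
  | succ k ih =>
    have hP := Nat.two_pow_pos k
    have hq : (n + 2 ^ (k + 1)) / 2 ^ k = n / 2 ^ k + 2 := by
      rw [pow_succ, mul_two, ← add_assoc, Nat.add_div_right _ hP, Nat.add_div_right _ hP]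
    simp only [thetaNat, hq, Nat.add_mod_right]
    split_ifs with h
    · rw [pow_succ]; ring
    · have hPn := le_of_div_mod_two_ne_zero h
      rw [pow_succ, show n + 2 ^ k * 2 - 2 ^ k = n - 2 ^ k + 2 ^ k + 2 ^ k by omega, ih, ih]
      ring

lemma thetaNat_succ_thetaNat_succ (k n : ℕ) :
    thetaNat (k + 1) (thetaNat (k + 1) n) = thetaNat k n := by
  have hq := thetaNat_succ_div_two_pow k n
  rw [thetaNat.eq_2 (thetaNat (k + 1) n) k, hq]
  by_cases h : n / 2 ^ k % 2 = 0
  · rw [if_pos h, if_neg (by omega), thetaNat, if_pos h, Nat.add_sub_cancel]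
  · rw [if_neg h, if_pos (by omega), thetaNat, if_neg h, ← thetaNat_add_two_pow,
      Nat.sub_add_cancel (le_of_div_mod_two_ne_zero h)]

lemma thetaNat_iterate_two_pow (s j : ℕ) : (thetaNat (s + j))^[2 ^ j] = thetaNat s := by
  induction j with
  | zero => rfl
  | succ j ih =>
    have hsq : (thetaNat (s + j + 1))^[2] = thetaNat (s + j) :=
      funext (thetaNat_succ_thetaNat_succ _)
    rw [pow_succ', Function.iterate_mul, ← add_assoc, hsq, ih]

lemma val_thetaPow2_pow (k t : ℕ) (x : Fin (2 ^ k)) :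
    ((thetaPow2 k ^ t) x : ℕ) = (thetaNat k)^[t] x := by
  rw [Equiv.Perm.coe_pow]
  exact Function.Semiconj.iterate_right (f := Fin.val) (val_thetaPow2 k) t x

lemma mem_block_iff {k j i : ℕ} (hi : 1 ≤ i) (x : Fin (2 ^ k)) :
    x ∈ block k j i ↔ (x : ℕ) / 2 ^ (k - j) = i - 1 := by
  have hP := Nat.two_pow_pos (k - j)
  rw [block, Set.mem_ofPred_eq, ← Nat.le_div_iff_mul_le hP, ← Nat.div_lt_iff_lt_mul hP]
  omega

/-- Simplicity of the recursively pasted permutations `θ_k`: for `0 ≤ j ≤ k`, the iterate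
`θ_k^(2^j)` maps each block `P(2^k, 2^j, i)` (with `1 ≤ i ≤ 2^j`) onto itself, and for
`0 ≤ j < k` it maps each block `P(2^k, 2^{j+1}, i)` (with `1 ≤ i ≤ 2^{j+1}`) onto a set
disjoint from it. -/
theorem thetaPow2_simple (k : ℕ) :
    (∀ j, j ≤ k → ∀ i, 1 ≤ i → i ≤ 2 ^ j →
      ⇑(thetaPow2 k ^ 2 ^ j) '' block k j i = block k j i) ∧
    (∀ j, j < k → ∀ i, 1 ≤ i → i ≤ 2 ^ (j + 1) →
      Disjoint (⇑(thetaPow2 k ^ 2 ^ j) '' block k (j + 1) i) (block k (j + 1) i)) := by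
  constructor
  · intro j hj i hi _
    obtain ⟨s, rfl⟩ : ∃ s, k = s + j := ⟨k - j, by omega⟩
    have hmem (x : Fin (2 ^ (s + j))) :
        (thetaPow2 (s + j) ^ 2 ^ j) x ∈ block (s + j) j i ↔ x ∈ block (s + j) j i := by
      rw [mem_block_iff hi, mem_block_iff hi, val_thetaPow2_pow, thetaNat_iterate_two_pow,
        Nat.add_sub_cancel, thetaNat_div_two_pow]
    exact ((Equiv.preimage_eq_iff_eq_image _ _ _).mp (Set.ext hmem)).symm
  · intro j hj i hi _
    obtain ⟨s, rfl⟩ : ∃ s, k = s + 1 + j := ⟨k - j - 1, by omega⟩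
    have hs : s + 1 + j - (j + 1) = s := by omega
    rw [Set.disjoint_left]
    rintro _ ⟨x, hx, rfl⟩ hσx
    rw [mem_block_iff hi, hs] at hx hσx
    rw [val_thetaPow2_pow, thetaNat_iterate_two_pow] at hσx
    exact thetaNat_succ_div_two_pow_ne s x (hσx.trans hx.symm)
end
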